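/- arXiv:2105.04202 — 2 statements merged into one kernel-verified Lean document; each statement's English description precedes it below -/
import Mathlib

section
/- Let μ > 0 and let ψ be a solution of the AL lattice on [0,T_f]. Then the deformed norm P_μ(ψ(t)) = ∑_{n∈ℤ} ln(1 + μ|ψ_n(t)|²) is conserved: P_μ(ψ(t)) = P_μ(ψ(0)) for all t ∈ [0,T_f]. -/
/-!
Write `ρ_n = 1 + μ|ψ_n|²`. The functional `P_μ` is Fréchet differentiable on `ℓ²` with
`DP_μ(u) v = ∑ₙ (2μ/ρ_n) Re(ū_n v_n)`: the remainder of each term is at most `2μ|v_n|²`, since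
`log` is controlled to second order by `log x ≤ x - 1` and `log x ≥ 1 - 1/x`. Along the AL flow,
`iψ̇_n = ρ_n(ψ_{n+1} + ψ_{n-1}) - 2ψ_n`, so `(2μ/ρ_n) Re(ψ̄_n ψ̇_n) = J_n - J_{n-1}` with the
summable current `J_n = 2μ Im(ψ̄_n ψ_{n+1})`; the sum telescopes to `0`, and a function with zero
derivative on `[0, T_f]` is constant.
-/

noncomputable section

open Set

/-- The sequence space ℓ²(ℤ,ℂ). -/
abbrev Seq2 := lp (fun _ : ℤ => ℂ) 2


/-- `ψ` is a solution of the Ablowitz–Ladik (AL) lattice (κ = ν = 1) on `[0,Tf]`: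
a continuously differentiable curve into ℓ²(ℤ,ℂ) satisfying
`i dψ_n/dt = (ψ_{n+1} − 2ψ_n + ψ_{n−1}) + μ|ψ_n|²(ψ_{n+1} + ψ_{n−1})` componentwise. -/
def IsALSolution (μ Tf : ℝ) (ψ : ℝ → Seq2) : Prop :=
  ∃ ψdot : ℝ → Seq2, ContinuousOn ψdot (Icc 0 Tf) ∧
    ∀ t ∈ Icc (0:ℝ) Tf,
      HasDerivWithinAt ψ (ψdot t) (Icc 0 Tf) t ∧
      ∀ n : ℤ, Complex.I * ψdot t n =
        (ψ t (n+1) - 2 * ψ t n + ψ t (n-1))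
          + (μ : ℂ) * ((‖ψ t n‖)^2 : ℝ) * (ψ t (n+1) + ψ t (n-1))

open Real Asymptotics
open scoped RealInnerProductSpace

theorem log_sub_log_sub_div_mem_Icc {x y : ℝ} (hx : 0 < x) (hy : 0 < y) :
    log x - log y - (x - y) / y ∈ Icc (-((x - y) ^ 2 / (x * y))) 0 := by
  rw [← log_div hx.ne' hy.ne']
  have hupper := log_le_sub_one_of_pos (div_pos hx hy)
  have hlower := one_sub_inv_le_log_of_pos (div_pos hx hy)
  have hsub : x / y - 1 = (x - y) / y := by field_simp
  have hgap : 1 - (x / y)⁻¹ - (x - y) / y = -((x - y) ^ 2 / (x * y)) := by field_simp; ring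
  constructor <;> linarith

theorem abs_log_one_add_mul_norm_sq_sub_le {E : Type*} [NormedAddCommGroup E]
    [InnerProductSpace ℝ E] {μ : ℝ} (hμ : 0 ≤ μ) (x y : E) :
    |log (1 + μ * ‖x + y‖ ^ 2) - log (1 + μ * ‖x‖ ^ 2) - 2 * μ / (1 + μ * ‖x‖ ^ 2) * ⟪x, y⟫|
      ≤ 2 * μ * ‖y‖ ^ 2 := by
  set X := 1 + μ * ‖x + y‖ ^ 2
  set Y := 1 + μ * ‖x‖ ^ 2
  have hX : 1 ≤ X := by simp only [X]; nlinarith [sq_nonneg ‖x + y‖]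
  have hY : 1 ≤ Y := by simp only [Y]; nlinarith [sq_nonneg ‖x‖]
  have hXY : X - Y = μ * (2 * ⟪x, y⟫ + ‖y‖ ^ 2) := by
    simp only [X, Y, norm_add_sq_real]; ring
  -- `(‖x+y‖² - ‖x‖²)² ≤ ‖y‖² (‖x+y‖ + ‖x‖)² ≤ 2‖y‖² (‖x+y‖² + ‖x‖²)`, and `μ(a + b) ≤ (1+μa)(1+μb)`
  have hsq : (X - Y) ^ 2 ≤ 2 * μ * ‖y‖ ^ 2 * (X * Y) := by
    have hdiff : |‖x + y‖ - ‖x‖| ≤ ‖y‖ := by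
      simpa using abs_norm_sub_norm_le (x + y) x
    have h1 : (‖x + y‖ - ‖x‖) ^ 2 ≤ ‖y‖ ^ 2 := by
      simpa [sq_abs] using pow_le_pow_left₀ (abs_nonneg _) hdiff 2
    have h2 : (X - Y) ^ 2 = μ ^ 2 * ((‖x + y‖ - ‖x‖) ^ 2 * (‖x + y‖ + ‖x‖) ^ 2) := by
      simp only [X, Y]; ring
    have h3 : (‖x + y‖ + ‖x‖) ^ 2 ≤ 2 * (‖x + y‖ ^ 2 + ‖x‖ ^ 2) := by
      nlinarith [sq_nonneg (‖x + y‖ - ‖x‖)]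
    have h4 : μ * (‖x + y‖ ^ 2 + ‖x‖ ^ 2) ≤ X * Y := by
      simp only [X, Y]
      nlinarith [mul_nonneg (mul_nonneg hμ hμ) (mul_nonneg (sq_nonneg ‖x + y‖) (sq_nonneg ‖x‖))]
    rw [h2]
    calc μ ^ 2 * ((‖x + y‖ - ‖x‖) ^ 2 * (‖x + y‖ + ‖x‖) ^ 2)
        ≤ μ ^ 2 * (‖y‖ ^ 2 * (2 * (‖x + y‖ ^ 2 + ‖x‖ ^ 2))) := by gcongr
      _ = 2 * μ * ‖y‖ ^ 2 * (μ * (‖x + y‖ ^ 2 + ‖x‖ ^ 2)) := by ring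
      _ ≤ 2 * μ * ‖y‖ ^ 2 * (X * Y) := by gcongr
  obtain ⟨hlo, hhi⟩ := log_sub_log_sub_div_mem_Icc (by linarith : 0 < X) (by linarith : 0 < Y)
  have hlo' : -(2 * μ * ‖y‖ ^ 2) ≤ -((X - Y) ^ 2 / (X * Y)) := by
    rw [neg_le_neg_iff, div_le_iff₀ (by positivity)]; exact hsq
  have hsplit : 2 * μ / Y * ⟪x, y⟫ = (X - Y) / Y - μ * ‖y‖ ^ 2 / Y := by
    rw [hXY]; ring
  have hrem : μ * ‖y‖ ^ 2 / Y ≤ μ * ‖y‖ ^ 2 := div_le_self (by positivity) hY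
  have hrem0 : 0 ≤ μ * ‖y‖ ^ 2 / Y := by positivity
  rw [hsplit, abs_le]
  constructor <;> linarith

theorem lp.hasSum_norm_sq {ι : Type*} {G : ι → Type*} [∀ i, NormedAddCommGroup (G i)]
    (u : lp G 2) : HasSum (fun i => ‖u i‖ ^ 2) (‖u‖ ^ 2) := by
  simpa using lp.hasSum_norm (p := 2) (by norm_num) u

section DeformedNorm

variable {ι E : Type*} [NormedAddCommGroup E] {μ : ℝ}

def deformedNorm (μ : ℝ) (u : lp (fun _ : ι => E) 2) : ℝ :=
  ∑' i, log (1 + μ * ‖u i‖ ^ 2)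

theorem summable_log_one_add_mul_norm_sq (hμ : 0 ≤ μ) (u : lp (fun _ : ι => E) 2) :
    Summable fun i => log (1 + μ * ‖u i‖ ^ 2) := by
  refine ((lp.hasSum_norm_sq u).summable.mul_left μ).of_nonneg_of_le (fun i => ?_) (fun i => ?_)
  · exact log_nonneg (by nlinarith [sq_nonneg ‖u i‖])
  · have := log_le_sub_one_of_pos (by positivity : 0 < 1 + μ * ‖u i‖ ^ 2)
    linarith

variable [InnerProductSpace ℝ E]

theorem memℓp_deformedNormGrad (hμ : 0 ≤ μ) (u : lp (fun _ : ι => E) 2) :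
    Memℓp (fun i => (2 * μ / (1 + μ * ‖u i‖ ^ 2)) • u i) 2 := by
  refine ((lp.memℓp u).const_smul (2 * μ)).mono' fun i => ?_
  rw [Pi.smul_apply, norm_smul, norm_smul, Real.norm_of_nonneg (by positivity),
    Real.norm_of_nonneg (by positivity)]
  gcongr
  exact div_le_self (by positivity) (by nlinarith [sq_nonneg ‖u i‖])

def deformedNormGrad (hμ : 0 ≤ μ) (u : lp (fun _ : ι => E) 2) : lp (fun _ : ι => E) 2 :=
  ⟨_, memℓp_deformedNormGrad hμ u⟩

theorem deformedNormGrad_apply (hμ : 0 ≤ μ) (u : lp (fun _ : ι => E) 2) (i : ι) :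
    deformedNormGrad hμ u i = (2 * μ / (1 + μ * ‖u i‖ ^ 2)) • u i :=
  rfl

theorem inner_deformedNormGrad (hμ : 0 ≤ μ) (u v : lp (fun _ : ι => E) 2) :
    ⟪deformedNormGrad hμ u, v⟫ = ∑' i, 2 * μ / (1 + μ * ‖u i‖ ^ 2) * ⟪u i, v i⟫ := by
  rw [lp.inner_eq_tsum]
  simp only [deformedNormGrad_apply, real_inner_smul_left]

theorem abs_deformedNorm_add_sub_sub_inner_le (hμ : 0 ≤ μ) (u v : lp (fun _ : ι => E) 2) :
    |deformedNorm μ (u + v) - deformedNorm μ u - ⟪deformedNormGrad hμ u, v⟫|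
      ≤ 2 * μ * ‖v‖ ^ 2 := by
  rw [inner_deformedNormGrad, deformedNorm, deformedNorm,
    ← (summable_log_one_add_mul_norm_sq hμ (u + v)).tsum_sub
      (summable_log_one_add_mul_norm_sq hμ u), ← Summable.tsum_sub _ _]
  · rw [← Real.norm_eq_abs]
    refine tsum_of_norm_bounded ((lp.hasSum_norm_sq v).mul_left (2 * μ)) fun i => ?_
    rw [Real.norm_eq_abs, lp.coeFn_add, Pi.add_apply]
    exact abs_log_one_add_mul_norm_sq_sub_le hμ (u i) (v i)
  · exact (summable_log_one_add_mul_norm_sq hμ (u + v)).sub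
      (summable_log_one_add_mul_norm_sq hμ u)
  · simpa only [deformedNormGrad_apply, real_inner_smul_left] using
      lp.summable_inner (𝕜 := ℝ) (deformedNormGrad hμ u) v

theorem hasFDerivAt_deformedNorm (hμ : 0 ≤ μ) (u : lp (fun _ : ι => E) 2) :
    HasFDerivAt (deformedNorm μ) (innerSL ℝ (deformedNormGrad hμ u)) u := by
  rw [hasFDerivAt_iff_isLittleO_nhds_zero]
  refine (IsBigO.of_bound (2 * μ) (Filter.Eventually.of_forall fun v => ?_)).trans_isLittleO
    (isLittleO_norm_pow_id one_lt_two)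
  rw [Real.norm_eq_abs, Real.norm_of_nonneg (by positivity)]
  exact abs_deformedNorm_add_sub_sub_inner_le hμ u v

end DeformedNorm

theorem tsum_sub_comp_sub_one {α : Type*} [AddCommGroup α] [TopologicalSpace α]
    [IsTopologicalAddGroup α] [T2Space α] {f : ℤ → α} (hf : Summable f) :
    ∑' n, (f n - f (n - 1)) = 0 := by
  have hf' : Summable fun n : ℤ => f (n - 1) := (Equiv.subRight 1).summable_iff.mpr hf
  have hshift := (Equiv.subRight (1 : ℤ)).tsum_eq f
  simp only [Equiv.subRight_apply] at hshift
  rw [hf.tsum_sub hf', hshift, sub_self]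

open ComplexConjugate

theorem Complex.inner_eq_mul_im_of_I_mul_eq {μ : ℝ} {x y a b : ℂ}
    (hy : I * y = (a - 2 * x + b) + (μ : ℂ) * ((‖x‖ ^ 2 : ℝ) : ℂ) * (a + b)) :
    ⟪x, y⟫ = (1 + μ * ‖x‖ ^ 2) * ((conj x * a).im + (conj x * b).im) := by
  rw [Complex.sq_norm, Complex.normSq_apply] at hy ⊢
  have hre := congrArg Complex.re hy
  have him := congrArg Complex.im hy
  simp only [Complex.mul_re, Complex.mul_im, Complex.I_re, Complex.I_im, Complex.add_re,
    Complex.add_im, Complex.sub_re, Complex.sub_im, Complex.ofReal_re, Complex.ofReal_im,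
    Complex.re_ofNat, Complex.im_ofNat] at hre him
  simp only [Complex.inner, Complex.mul_re, Complex.mul_im, Complex.conj_re, Complex.conj_im]
  linear_combination x.re * him - x.im * hre

def alCurrent (μ : ℝ) (u : Seq2) (n : ℤ) : ℝ :=
  2 * μ * (conj (u n) * u (n + 1)).im

theorem summable_alCurrent (μ : ℝ) (u : Seq2) : Summable (alCurrent μ u) := by
  have hsq := (lp.hasSum_norm_sq u).summable
  have hbound : Summable fun n : ℤ => |μ| * (‖u n‖ ^ 2 + ‖u (n + 1)‖ ^ 2) :=
    (hsq.add ((Equiv.addRight 1).summable_iff.mpr hsq)).mul_left _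
  refine hbound.of_norm_bounded fun n => ?_
  calc ‖alCurrent μ u n‖ ≤ 2 * |μ| * (‖u n‖ * ‖u (n + 1)‖) := by
        rw [alCurrent, Real.norm_eq_abs, abs_mul, abs_mul, abs_two]
        gcongr
        exact (Complex.abs_im_le_norm _).trans_eq (by rw [norm_mul, Complex.norm_conj])
    _ ≤ |μ| * (‖u n‖ ^ 2 + ‖u (n + 1)‖ ^ 2) := by
        nlinarith [abs_nonneg μ, two_mul_le_add_sq ‖u n‖ ‖u (n + 1)‖]

theorem inner_deformedNormGrad_eq_zero_of_AL {μ : ℝ} (hμ : 0 ≤ μ) (u v : Seq2)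
    (hv : ∀ n : ℤ, Complex.I * v n = (u (n + 1) - 2 * u n + u (n - 1))
      + (μ : ℂ) * ((‖u n‖ ^ 2 : ℝ) : ℂ) * (u (n + 1) + u (n - 1))) :
    ⟪deformedNormGrad hμ u, v⟫ = 0 := by
  have hflux (n : ℤ) : 2 * μ / (1 + μ * ‖u n‖ ^ 2) * ⟪u n, v n⟫
      = alCurrent μ u n - alCurrent μ u (n - 1) := by
    have hpos : 0 < 1 + μ * ‖u n‖ ^ 2 := by positivity
    have hswap : (conj (u (n - 1)) * u n).im = -(conj (u n) * u (n - 1)).im := by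
      rw [← Complex.conj_im, map_mul, Complex.conj_conj, mul_comm]
    rw [Complex.inner_eq_mul_im_of_I_mul_eq (hv n), alCurrent, alCurrent, sub_add_cancel, hswap]
    field_simp
    ring
  rw [inner_deformedNormGrad, tsum_congr hflux, tsum_sub_comp_sub_one (summable_alCurrent μ u)]

/-- Conservation of the deformed norm `P_μ(ψ(t)) = ∑_{n∈ℤ} ln(1 + μ|ψ_n(t)|²)`
along solutions of the AL lattice. -/
theorem al_deformed_norm_conserved (μ Tf : ℝ) (hμ : 0 < μ)
    (ψ : ℝ → Seq2) (hψ : IsALSolution μ Tf ψ) :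
    ∀ t ∈ Icc (0:ℝ) Tf,
      (∑' n : ℤ, Real.log (1 + μ * (‖ψ t n‖)^2))
        = ∑' n : ℤ, Real.log (1 + μ * (‖ψ 0 n‖)^2) := by
  obtain ⟨ψdot, -, hsol⟩ := hψ
  have hderiv : ∀ t ∈ Icc (0:ℝ) Tf,
      HasDerivWithinAt (fun s => deformedNorm μ (ψ s)) 0 (Icc 0 Tf) t := fun t ht => by
    have h := (hasFDerivAt_deformedNorm hμ.le (ψ t)).comp_hasDerivWithinAt t (hsol t ht).1
    rwa [innerSL_apply_apply, inner_deformedNormGrad_eq_zero_of_AL hμ.le _ _ (hsol t ht).2] at h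
  intro t ht
  have h0 : (0:ℝ) ∈ Icc 0 Tf := ⟨le_rfl, ht.1.trans ht.2⟩
  have hconst := (convex_Icc 0 Tf).norm_image_sub_le_of_norm_hasDerivWithin_le hderiv
    (fun _ _ => norm_zero.le) h0 ht
  rw [zero_mul, norm_le_zero_iff, sub_eq_zero] at hconst
  exact hconst
end
end

section
/- Let μ > 0, γ > 0, σ > 0. Let ψ be a solution of the AL lattice on [0,T_f] and φ a solution of the DNLS lattice with power nonlinearity on [0,T_f], and set y(t) = ψ(t) − φ(t). Then for every t ∈ [0,T_f], ‖y(t)‖_{ℓ²} ≤ ‖y(0)‖_{ℓ²} + ∫₀ᵗ ( 2μ ‖ψ(s)‖³_{ℓ²} + γ ‖φ(s)‖^{2σ+1}_{ℓ²} ) ds. -/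
/-!
With `y = ψ - φ`, subtracting the two lattices gives `i ẏ = Δ y + N`, where `Δ` is the discrete
Laplacian and `N` the difference of the two nonlinearities. Since `Δ` is symmetric on ℓ², it does
not contribute to `d/dt ‖y‖² = 2 Re ⟪y, ẏ⟫`, so `Re ⟪y, ẏ⟫ ≤ ‖y‖ ‖N‖`; and since every entry of an
ℓ² sequence is bounded by its norm, `‖N‖ ≤ 2μ‖ψ‖³ + γ‖φ‖^(2σ+1)`. Integrating this differential
inequality for `‖y‖` gives the claim.
-/

noncomputable section

open Set

/-- `φ` is a solution of the DNLS lattice with power nonlinearity on `[0,Tf]`: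
a continuously differentiable curve into ℓ²(ℤ,ℂ) satisfying
`i dφ_n/dt = (φ_{n+1} − 2φ_n + φ_{n−1}) + γ|φ_n|^{2σ}φ_n` componentwise. -/
def IsDNLSSolution (γ σ Tf : ℝ) (φ : ℝ → Seq2) : Prop :=
  ∃ φdot : ℝ → Seq2, ContinuousOn φdot (Icc 0 Tf) ∧
    ∀ t ∈ Icc (0:ℝ) Tf,
      HasDerivWithinAt φ (φdot t) (Icc 0 Tf) t ∧
      ∀ n : ℤ, Complex.I * φdot t n =
        (φ t (n+1) - 2 * φ t n + φ t (n-1))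
          + (γ : ℂ) * ((‖φ t n‖) ^ (2*σ) : ℝ) * φ t n

open scoped InnerProductSpace ENNReal

theorem Memℓp.comp_injective {α β : Type*} {E : Type*} [NormedAddCommGroup E] {p : ℝ≥0∞}
    {f : β → E} (hf : Memℓp f p) {e : α → β} (he : e.Injective) : Memℓp (f ∘ e) p := by
  obtain (rfl | rfl | hp) := p.trichotomy
  · rw [memℓp_zero_iff] at hf ⊢
    exact hf.preimage he.injOn
  · rw [memℓp_infty_iff] at hf ⊢
    exact hf.mono (Set.range_comp_subset_range e (fun i => ‖f i‖))
  · rw [memℓp_gen_iff hp] at hf ⊢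
    exact hf.comp_injective he

namespace lp

variable {E : Type*} [NormedAddCommGroup E] {p : ℝ≥0∞}

def shift (f : lp (fun _ : ℤ => E) p) (k : ℤ) : lp (fun _ : ℤ => E) p :=
  ⟨fun n => f (n + k), (lp.memℓp f).comp_injective (add_left_injective k)⟩

@[simp] theorem shift_apply (f : lp (fun _ : ℤ => E) p) (k n : ℤ) : shift f k n = f (n + k) := rfl

theorem norm_shift (hp : 0 < p.toReal) (f : lp (fun _ : ℤ => E) p) (k : ℤ) :
    ‖shift f k‖ = ‖f‖ := by
  rw [norm_eq_tsum_rpow hp, norm_eq_tsum_rpow hp]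
  congr 1
  exact (Equiv.addRight k).tsum_eq (fun n => ‖f n‖ ^ p.toReal)

section InnerProduct

variable {𝕜 : Type*} [RCLike 𝕜] [InnerProductSpace 𝕜 E]

theorem inner_shift_left (f g : lp (fun _ : ℤ => E) 2) (k : ℤ) :
    ⟪shift f k, g⟫_𝕜 = ⟪f, shift g (-k)⟫_𝕜 := by
  rw [inner_eq_tsum, inner_eq_tsum]
  simpa using (Equiv.addRight k).tsum_eq (fun n => ⟪f n, g (n + -k)⟫_𝕜)

def laplacian (f : lp (fun _ : ℤ => E) p) : lp (fun _ : ℤ => E) p :=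
  shift f 1 - 2 • f + shift f (-1)

@[simp] theorem laplacian_apply (f : lp (fun _ : ℤ => E) p) (n : ℤ) :
    laplacian f n = f (n + 1) - 2 • f n + f (n - 1) := by
  simp [laplacian, sub_eq_add_neg]

theorem inner_laplacian_left (f g : lp (fun _ : ℤ => E) 2) :
    ⟪laplacian f, g⟫_𝕜 = ⟪f, laplacian g⟫_𝕜 := by
  simp only [laplacian, two_smul, inner_add_left, inner_sub_left, inner_add_right,
    inner_sub_right, inner_shift_left, neg_neg]
  ring

theorem im_inner_laplacian_self (f : lp (fun _ : ℤ => E) 2) :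
    RCLike.im ⟪f, laplacian f⟫_𝕜 = 0 := by
  rw [← RCLike.conj_eq_iff_im, inner_conj_symm, inner_laplacian_left]

end InnerProduct

end lp

theorem hasDerivWithinAt_integral_Icc {G : Type*} [NormedAddCommGroup G] [NormedSpace ℝ G]
    [CompleteSpace G] {g : ℝ → G} {a b x : ℝ} (hg : ContinuousOn g (Icc a b)) (hx : x ∈ Icc a b) :
    HasDerivWithinAt (fun u => ∫ s in a..u, g s) (g x) (Icc a b) x := by
  have : Fact (x ∈ Icc a b) := ⟨hx⟩
  exact intervalIntegral.integral_hasDerivWithinAt_right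
    ((hg.mono (Icc_subset_Icc le_rfl hx.2)).intervalIntegrable_of_Icc hx.1)
    (hg.stronglyMeasurableAtFilter_nhdsWithin measurableSet_Icc x) (hg x hx)

section CurveComparison

variable {𝕜 E : Type*} [RCLike 𝕜] [NormedAddCommGroup E] [InnerProductSpace 𝕜 E]
  [NormedSpace ℝ E]

theorem HasDerivWithinAt.norm_sq_re_inner {y : ℝ → E} {y' : E} {s : Set ℝ} {x : ℝ}
    (hy : HasDerivWithinAt y y' s x) :
    HasDerivWithinAt (fun t => ‖y t‖ ^ 2) (2 * RCLike.re ⟪y x, y'⟫_𝕜) s x := by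
  have h := (RCLike.reCLM (K := 𝕜)).hasFDerivAt.comp_hasDerivWithinAt x (hy.inner 𝕜 hy)
  simp only [Function.comp_def, RCLike.reCLM_apply, inner_self_eq_norm_sq, map_add] at h
  rwa [← inner_conj_symm y' (y x), RCLike.conj_re, ← two_mul] at h

theorem norm_le_add_integral_of_re_inner_deriv_le {y y' : ℝ → E} {g : ℝ → ℝ} {a b t : ℝ}
    (hy : ∀ s ∈ Icc a b, HasDerivWithinAt y (y' s) (Icc a b) s)
    (hg : ContinuousOn g (Icc a b)) (hg₀ : ∀ s ∈ Icc a b, 0 ≤ g s)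
    (hbound : ∀ s ∈ Ico a b, RCLike.re ⟪y s, y' s⟫_𝕜 ≤ ‖y s‖ * g s)
    (ht : t ∈ Icc a b) :
    ‖y t‖ ≤ ‖y a‖ + ∫ s in a..t, g s := by
  refine le_of_forall_pos_le_add fun ε hε => ?_
  -- `√(‖y‖² + ε²)` is a differentiable stand-in for `‖y‖`.
  set u : ℝ → ℝ := fun s => √(‖y s‖ ^ 2 + ε ^ 2)
  have hu_pos : ∀ s, 0 < u s := fun s => Real.sqrt_pos.2 (by positivity)
  have hy_le_u : ∀ s, ‖y s‖ ≤ u s := fun s =>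
    Real.le_sqrt_of_sq_le (le_add_of_nonneg_right (sq_nonneg ε))
  have hu : ∀ s ∈ Icc a b,
      HasDerivWithinAt u (RCLike.re ⟪y s, y' s⟫_𝕜 / u s) (Icc a b) s := by
    intro s hs
    convert (((hy s hs).norm_sq_re_inner (𝕜 := 𝕜)).add_const (ε ^ 2)).sqrt
      (by positivity) using 1
    field_simp
    exact mul_div_cancel_right₀ _ (hu_pos s).ne'
  have hu_deriv_le : ∀ s ∈ Ico a b, RCLike.re ⟪y s, y' s⟫_𝕜 / u s ≤ g s := by
    intro s hs
    have hgs := hg₀ s (Ico_subset_Icc_self hs)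
    rw [div_le_iff₀ (hu_pos s)]
    calc RCLike.re ⟪y s, y' s⟫_𝕜 ≤ ‖y s‖ * g s := hbound s hs
      _ ≤ g s * u s := by rw [mul_comm]; gcongr; exact hy_le_u s
  have hB : ∀ s ∈ Icc a b,
      HasDerivWithinAt (fun s => u a + ∫ r in a..s, g r) (g s) (Icc a b) s := fun s hs =>
    (hasDerivWithinAt_integral_Icc hg hs).const_add _
  have hu_le_B := image_le_of_deriv_right_le_deriv_boundary
    (fun s hs => (hu s hs).continuousWithinAt)
    (fun s hs => (hu s (Ico_subset_Icc_self hs)).mono_of_mem_nhdsWithin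
      (Icc_mem_nhdsGE_of_mem hs))
    (by simp) (fun s hs => (hB s hs).continuousWithinAt)
    (fun s hs => (hB s (Ico_subset_Icc_self hs)).mono_of_mem_nhdsWithin
      (Icc_mem_nhdsGE_of_mem hs))
    hu_deriv_le ht
  have hua : u a ≤ ‖y a‖ + ε := by
    refine Real.sqrt_le_iff.2 ⟨by positivity, ?_⟩
    nlinarith [norm_nonneg (y a)]
  linarith [hy_le_u t]

end CurveComparison

section PointwiseBound

variable {α : Type*} {E F : Type*} [NormedAddCommGroup E] [NormedAddCommGroup F] {p : ℝ≥0∞}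

theorem Memℓp.of_norm_le_mul {f : α → E} {g : α → F} (hg : Memℓp g p) (c : ℝ)
    (h : ∀ i, ‖f i‖ ≤ c * ‖g i‖) : Memℓp f p :=
  (hg.norm.const_mul c).mono h

theorem lp.norm_le_mul_of_forall_le [NormedSpace ℝ F] (hp : p ≠ 0) {c : ℝ} (hc : 0 ≤ c)
    {f : lp (fun _ : α => E) p} {g : lp (fun _ : α => F) p} (h : ∀ i, ‖f i‖ ≤ c * ‖g i‖) :
    ‖f‖ ≤ c * ‖g‖ := by
  calc ‖f‖ ≤ ‖c • g‖ := lp.norm_mono hp fun i => by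
        simpa [norm_smul, abs_of_nonneg hc] using h i
    _ ≤ c * ‖g‖ := by simpa [abs_of_nonneg hc] using lp.norm_const_smul_le hp c g

end PointwiseBound

theorem re_inner_le_of_I_smul_eq_add {E : Type*} [NormedAddCommGroup E] [InnerProductSpace ℂ E]
    {x v a w : E} (hv : Complex.I • v = a + w) (ha : (⟪x, a⟫_ℂ).im = 0) :
    (⟪x, v⟫_ℂ).re ≤ ‖x‖ * ‖w‖ := by
  have hv' : v = -Complex.I • (a + w) := by
    rw [← hv, smul_smul, neg_mul, Complex.I_mul_I, neg_neg, one_smul]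
  rw [hv', inner_smul_right, inner_add_right]
  simp only [Complex.mul_re, Complex.neg_re, Complex.I_re, Complex.neg_im, Complex.I_im,
    Complex.add_im, ha]
  simpa using (Complex.im_le_norm _).trans (norm_inner_le_norm (𝕜 := ℂ) x w)

theorem norm_al_term_le (μ : ℝ) (ψ : Seq2) (n : ℤ) :
    ‖(μ : ℂ) * ((‖ψ n‖ ^ 2 : ℝ) : ℂ) * (ψ (n + 1) + ψ (n - 1))‖
      ≤ |μ| * ‖ψ‖ ^ 2 * ‖(lp.shift ψ 1 + lp.shift ψ (-1)) n‖ := by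
  have hψn : ‖ψ n‖ ≤ ‖ψ‖ := lp.norm_apply_le_norm two_ne_zero ψ n
  simp only [norm_mul, Complex.norm_real, Real.norm_eq_abs, lp.coeFn_add, Pi.add_apply,
    lp.shift_apply, ← sub_eq_add_neg, abs_pow, abs_norm]
  gcongr

theorem norm_dnls_term_le (γ : ℝ) {σ : ℝ} (hσ : 0 ≤ σ) (φ : Seq2) (n : ℤ) :
    ‖(γ : ℂ) * ((‖φ n‖ ^ (2 * σ) : ℝ) : ℂ) * φ n‖ ≤ |γ| * ‖φ‖ ^ (2 * σ) * ‖φ n‖ := by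
  have hφn : ‖φ n‖ ≤ ‖φ‖ := lp.norm_apply_le_norm two_ne_zero φ n
  simp only [norm_mul, Complex.norm_real, Real.norm_eq_abs,
    abs_of_nonneg (Real.rpow_nonneg (norm_nonneg (φ n)) _)]
  gcongr

def alNonlinearity (μ : ℝ) (ψ : Seq2) : Seq2 :=
  ⟨fun n => (μ : ℂ) * ((‖ψ n‖ ^ 2 : ℝ) : ℂ) * (ψ (n + 1) + ψ (n - 1)),
    (lp.memℓp (lp.shift ψ 1 + lp.shift ψ (-1))).of_norm_le_mul _ (norm_al_term_le μ ψ)⟩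

def dnlsNonlinearity (γ : ℝ) {σ : ℝ} (hσ : 0 ≤ σ) (φ : Seq2) : Seq2 :=
  ⟨fun n => (γ : ℂ) * ((‖φ n‖ ^ (2 * σ) : ℝ) : ℂ) * φ n,
    (lp.memℓp φ).of_norm_le_mul _ (norm_dnls_term_le γ hσ φ)⟩

@[simp] theorem alNonlinearity_apply (μ : ℝ) (ψ : Seq2) (n : ℤ) :
    alNonlinearity μ ψ n = (μ : ℂ) * ((‖ψ n‖ ^ 2 : ℝ) : ℂ) * (ψ (n + 1) + ψ (n - 1)) := rfl

@[simp] theorem dnlsNonlinearity_apply (γ : ℝ) {σ : ℝ} (hσ : 0 ≤ σ) (φ : Seq2) (n : ℤ) :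
    dnlsNonlinearity γ hσ φ n = (γ : ℂ) * ((‖φ n‖ ^ (2 * σ) : ℝ) : ℂ) * φ n := rfl

theorem norm_alNonlinearity_le (μ : ℝ) (ψ : Seq2) :
    ‖alNonlinearity μ ψ‖ ≤ 2 * |μ| * ‖ψ‖ ^ 3 := by
  calc ‖alNonlinearity μ ψ‖ ≤ |μ| * ‖ψ‖ ^ 2 * ‖lp.shift ψ 1 + lp.shift ψ (-1)‖ :=
        lp.norm_le_mul_of_forall_le two_ne_zero (by positivity) (norm_al_term_le μ ψ)
    _ ≤ |μ| * ‖ψ‖ ^ 2 * (‖ψ‖ + ‖ψ‖) := by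
        grw [norm_add_le, lp.norm_shift (by norm_num), lp.norm_shift (by norm_num)]
    _ = 2 * |μ| * ‖ψ‖ ^ 3 := by ring

theorem norm_dnlsNonlinearity_le (γ : ℝ) {σ : ℝ} (hσ : 0 ≤ σ) (φ : Seq2) :
    ‖dnlsNonlinearity γ hσ φ‖ ≤ |γ| * ‖φ‖ ^ (2 * σ + 1) := by
  rw [Real.rpow_add_one' (norm_nonneg φ) (by positivity), ← mul_assoc]
  exact lp.norm_le_mul_of_forall_le two_ne_zero (by positivity) (norm_dnls_term_le γ hσ φ)

theorem I_smul_sub_eq_laplacian_add_nonlinearity {μ γ σ : ℝ} (hσ : 0 ≤ σ) {ψ φ ψ' φ' : Seq2}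
    (hψ : ∀ n : ℤ, Complex.I * ψ' n = (ψ (n + 1) - 2 * ψ n + ψ (n - 1))
      + (μ : ℂ) * ((‖ψ n‖ ^ 2 : ℝ) : ℂ) * (ψ (n + 1) + ψ (n - 1)))
    (hφ : ∀ n : ℤ, Complex.I * φ' n = (φ (n + 1) - 2 * φ n + φ (n - 1))
      + (γ : ℂ) * ((‖φ n‖ ^ (2 * σ) : ℝ) : ℂ) * φ n) :
    Complex.I • (ψ' - φ') =
      lp.laplacian (ψ - φ) + (alNonlinearity μ ψ - dnlsNonlinearity γ hσ φ) := by
  ext n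
  simp only [lp.coeFn_smul, lp.coeFn_sub, lp.coeFn_add, Pi.smul_apply, Pi.sub_apply,
    Pi.add_apply, smul_eq_mul, lp.laplacian_apply, alNonlinearity_apply, dnlsNonlinearity_apply,
    nsmul_eq_mul, Nat.cast_ofNat]
  linear_combination hψ n - hφ n

theorem re_inner_al_sub_dnls_le {μ γ σ : ℝ} (hσ : 0 ≤ σ) {ψ φ ψ' φ' : Seq2}
    (hψ : ∀ n : ℤ, Complex.I * ψ' n = (ψ (n + 1) - 2 * ψ n + ψ (n - 1))
      + (μ : ℂ) * ((‖ψ n‖ ^ 2 : ℝ) : ℂ) * (ψ (n + 1) + ψ (n - 1)))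
    (hφ : ∀ n : ℤ, Complex.I * φ' n = (φ (n + 1) - 2 * φ n + φ (n - 1))
      + (γ : ℂ) * ((‖φ n‖ ^ (2 * σ) : ℝ) : ℂ) * φ n) :
    (⟪ψ - φ, ψ' - φ'⟫_ℂ).re ≤ ‖ψ - φ‖ * (2 * |μ| * ‖ψ‖ ^ 3 + |γ| * ‖φ‖ ^ (2 * σ + 1)) := by
  refine (re_inner_le_of_I_smul_eq_add (I_smul_sub_eq_laplacian_add_nonlinearity hσ hψ hφ)
    (lp.im_inner_laplacian_self (𝕜 := ℂ) (ψ - φ))).trans ?_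
  gcongr
  exact (norm_sub_le _ _).trans
    (add_le_add (norm_alNonlinearity_le μ ψ) (norm_dnlsNonlinearity_le γ hσ φ))

/-- Integral inequality for the distance of an AL solution ψ and a DNLS solution φ:
`‖y(t)‖ ≤ ‖y(0)‖ + ∫₀ᵗ (2μ‖ψ(s)‖³ + γ‖φ(s)‖^{2σ+1}) ds` with `y = ψ − φ`. -/
theorem al_dnls_distance_integral_inequality (μ γ σ Tf : ℝ)
    (hμ : 0 < μ) (hγ : 0 < γ) (hσ : 0 < σ)
    (ψ φ : ℝ → Seq2) (hψ : IsALSolution μ Tf ψ) (hφ : IsDNLSSolution γ σ Tf φ) :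
    ∀ t ∈ Icc (0:ℝ) Tf,
      ‖ψ t - φ t‖ ≤ ‖ψ 0 - φ 0‖
        + ∫ s in (0:ℝ)..t, (2 * μ * ‖ψ s‖^3 + γ * ‖φ s‖ ^ (2*σ+1)) := by
  obtain ⟨ψ', -, hψ'⟩ := hψ
  obtain ⟨φ', -, hφ'⟩ := hφ
  intro t ht
  have hψc : ContinuousOn ψ (Icc 0 Tf) := fun s hs => (hψ' s hs).1.continuousWithinAt
  have hφc : ContinuousOn φ (Icc 0 Tf) := fun s hs => (hφ' s hs).1.continuousWithinAt
  have hd : ∀ s ∈ Icc (0:ℝ) Tf,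
      HasDerivWithinAt (fun s => ψ s - φ s) (ψ' s - φ' s) (Icc 0 Tf) s :=
    fun s hs => (hψ' s hs).1.sub (hφ' s hs).1
  refine norm_le_add_integral_of_re_inner_deriv_le (𝕜 := ℂ) hd ?_ (fun s _ => by positivity)
    (fun s hs => ?_) ht
  · exact (continuousOn_const.mul (hψc.norm.pow 3)).add
      (continuousOn_const.mul (hφc.norm.rpow_const fun _ _ => Or.inr (by positivity)))
  · have hs' := Ico_subset_Icc_self hs
    have h := re_inner_al_sub_dnls_le hσ.le (hψ' s hs').2 (hφ' s hs').2
    rw [abs_of_pos hμ, abs_of_pos hγ] at h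
    exact h
end
end
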